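/- arXiv:2601.10618 — 6 statements merged into one kernel-verified Lean document; each statement's English description precedes it below -/
import Mathlib

section
/- Let n ≥ 1, let u : EuclideanSpace ℝ (Fin n) → ℝ be C² with ∇u(x) ≠ 0 for every x, set ν(x) = ∇u(x)/‖∇u(x)‖, and let W : EuclideanSpace ℝ (Fin n) → EuclideanSpace ℝ (Fin n) be a C¹ vector field satisfying ⟨W(x), ∇u(x)⟩ = 0 for every x (W is tangential to the level sets of u). If the tangential divergence vanishes everywhere, i.e. div W(x) − ⟨(fderiv ℝ W x)(ν(x)), ν(x)⟩ = 0 for all x, then div(‖∇u‖ W) = 0 everywhere, where ‖∇u‖ W denotes the vector field x ↦ ‖∇u(x)‖ W(x). -/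
open scoped RealInnerProductSpace

noncomputable section

/-- Divergence of a vector field on Euclidean space: trace of the Fréchet derivative. -/
def ediv {n : ℕ} (V : EuclideanSpace ℝ (Fin n) → EuclideanSpace ℝ (Fin n))
    (x : EuclideanSpace ℝ (Fin n)) : ℝ :=
  ∑ i, ⟪fderiv ℝ V x (EuclideanSpace.single i 1), EuclideanSpace.single i 1⟫

/-- Decomposition of a vector in Euclidean space along the standard basis. -/
lemma euclidean_sum_single {n : ℕ} (v : EuclideanSpace ℝ (Fin n)) :
    ∑ i, v i • EuclideanSpace.single i (1 : ℝ) = v := by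
  ext j
  rw [WithLp.ofLp_sum, Finset.sum_apply]
  simp [EuclideanSpace.single_apply]

/-- If `W` is a tangential vector field along the level sets of `u` whose tangential
divergence vanishes, then the vector field `‖∇u‖ W` is divergence free. -/
theorem div_free_of_tangential_div_free
    {n : ℕ} (hn : 1 ≤ n)
    (u : EuclideanSpace ℝ (Fin n) → ℝ) (hu : ContDiff ℝ 2 u)
    (hgrad : ∀ x, gradient u x ≠ 0)
    (W : EuclideanSpace ℝ (Fin n) → EuclideanSpace ℝ (Fin n)) (hW : ContDiff ℝ 1 W)
    (ν : EuclideanSpace ℝ (Fin n) → EuclideanSpace ℝ (Fin n))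
    (hν : ∀ x, ν x = ‖gradient u x‖⁻¹ • gradient u x)
    (htan : ∀ x, ⟪W x, gradient u x⟫ = 0)
    (hdiv : ∀ x, ediv W x - ⟪fderiv ℝ W x (ν x), ν x⟫ = 0) :
    ∀ x, ediv (fun y => ‖gradient u y‖ • W y) x = 0 := by
  intro x
  have hud : Differentiable ℝ u := hu.differentiable two_ne_zero
  have hWd : Differentiable ℝ W := hW.differentiable one_ne_zero
  -- fderiv u is C¹, hence differentiable
  have hu2 : ContDiff ℝ (1 + 1 : ℕ) u := by exact_mod_cast hu
  have hfd : ContDiff ℝ 1 (fderiv ℝ u) := by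
    rw [show ((1 + 1 : ℕ) : WithTop ℕ∞) = (1 : WithTop ℕ∞) + 1 by norm_num] at hu2
    exact (contDiff_succ_iff_fderiv.mp hu2).2.2
  have hfdd : Differentiable ℝ (fderiv ℝ u) := hfd.differentiable one_ne_zero
  -- the linear isometry from the dual back to E
  set L : StrongDual ℝ (EuclideanSpace ℝ (Fin n)) →L[ℝ] EuclideanSpace ℝ (Fin n) :=
    (InnerProductSpace.toDual ℝ (EuclideanSpace ℝ (Fin n))).symm.toContinuousLinearEquiv.toContinuousLinearMap with hL
  have hgradeq : gradient u = fun y => L (fderiv ℝ u y) := rfl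
  set f'' : EuclideanSpace ℝ (Fin n) →L[ℝ] EuclideanSpace ℝ (Fin n) →L[ℝ] ℝ := fderiv ℝ (fderiv ℝ u) x with hf''
  have hf''at : HasFDerivAt (fderiv ℝ u) f'' x := (hfdd x).hasFDerivAt
  have hGat : HasFDerivAt (gradient u) (L.comp f'') x := by
    rw [hgradeq]
    exact L.hasFDerivAt.comp x hf''at
  set g : EuclideanSpace ℝ (Fin n) := gradient u x with hg
  set Gx : EuclideanSpace ℝ (Fin n) →L[ℝ] EuclideanSpace ℝ (Fin n) := L.comp f'' with hGx
  have hGinner : ∀ v w : EuclideanSpace ℝ (Fin n), ⟪Gx v, w⟫ = f'' v w := by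
    intro v w
    exact InnerProductSpace.toDual_symm_apply
  have hsymm : ∀ v w : EuclideanSpace ℝ (Fin n), f'' v w = f'' w v :=
    second_derivative_symmetric (fun y => (hud y).hasFDerivAt) hf''at
  set Wd : EuclideanSpace ℝ (Fin n) →L[ℝ] EuclideanSpace ℝ (Fin n) := fderiv ℝ W x with hWdx
  -- derivative of the tangency relation
  have htand : ∀ v : EuclideanSpace ℝ (Fin n), ⟪W x, Gx v⟫ + ⟪Wd v, g⟫ = 0 := by
    intro v
    have h1 : HasFDerivAt (fun y => ⟪W y, gradient u y⟫)
        ((fderivInnerCLM ℝ (W x, gradient u x)).comp (Wd.prod Gx)) x :=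
      (hWd x).hasFDerivAt.inner ℝ hGat
    have h2 : HasFDerivAt (fun y => ⟪W y, gradient u y⟫) (0 : EuclideanSpace ℝ (Fin n) →L[ℝ] ℝ) x := by
      have : (fun y => ⟪W y, gradient u y⟫) = fun _ : EuclideanSpace ℝ (Fin n) => (0 : ℝ) := funext htan
      rw [this]; exact hasFDerivAt_const 0 x
    have := h1.unique h2
    have := congrFun (congrArg (fun (T : EuclideanSpace ℝ (Fin n) →L[ℝ] ℝ) => (T : EuclideanSpace ℝ (Fin n) → ℝ)) this) v
    simpa [fderivInnerCLM_apply, real_inner_comm, hg] using this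
  -- derivative of the norm of the gradient
  have hgne : g ≠ 0 := hgrad x
  have hgn : ‖g‖ ≠ 0 := norm_ne_zero_iff.mpr hgne
  have hq : HasFDerivAt (fun y => ⟪gradient u y, gradient u y⟫)
      ((fderivInnerCLM ℝ (g, g)).comp (Gx.prod Gx)) x := hGat.inner ℝ hGat
  have hqx : ⟪g, g⟫ ≠ 0 := by
    rw [real_inner_self_eq_norm_sq]
    positivity
  have hsq : HasFDerivAt (fun y => Real.sqrt ⟪gradient u y, gradient u y⟫)
      ((1 / (2 * Real.sqrt ⟪g, g⟫)) • ((fderivInnerCLM ℝ (g, g)).comp (Gx.prod Gx))) x :=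
    hq.sqrt hqx
  have hnormeq : (fun y : EuclideanSpace ℝ (Fin n) => Real.sqrt ⟪gradient u y, gradient u y⟫)
      = fun y => ‖gradient u y‖ := by
    funext y
    rw [real_inner_self_eq_norm_sq, Real.sqrt_sq (norm_nonneg _)]
  have hsqrtg : Real.sqrt ⟪g, g⟫ = ‖g‖ := by
    rw [real_inner_self_eq_norm_sq, Real.sqrt_sq (norm_nonneg _)]
  set F' : EuclideanSpace ℝ (Fin n) →L[ℝ] ℝ :=
    (1 / (2 * Real.sqrt ⟪g, g⟫)) • ((fderivInnerCLM ℝ (g, g)).comp (Gx.prod Gx)) with hF'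
  have hF'at : HasFDerivAt (fun y => ‖gradient u y‖) F' x := by
    rw [← hnormeq]; exact hsq
  have hF'app : ∀ v : EuclideanSpace ℝ (Fin n), F' v = ‖g‖⁻¹ * ⟪Gx v, g⟫ := by
    intro v
    simp only [hF', ContinuousLinearMap.smul_apply, ContinuousLinearMap.comp_apply,
      ContinuousLinearMap.prod_apply, fderivInnerCLM_apply, hsqrtg, smul_eq_mul]
    rw [real_inner_comm g (Gx v)]
    field_simp
    ring
  -- derivative of the product
  have hprod : HasFDerivAt (fun y => ‖gradient u y‖ • W y)
      (‖g‖ • Wd + F'.smulRight (W x)) x := hF'at.smul (hWd x).hasFDerivAt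
  have hfderiv : fderiv ℝ (fun y => ‖gradient u y‖ • W y) x = ‖g‖ • Wd + F'.smulRight (W x) :=
    hprod.fderiv
  -- compute the divergence
  have hediv : ediv (fun y => ‖gradient u y‖ • W y) x = ‖g‖ * ediv W x + F' (W x) := by
    unfold ediv
    rw [hfderiv]
    have : ∀ i : Fin n,
        ⟪(‖g‖ • Wd + F'.smulRight (W x)) (EuclideanSpace.single i 1),
          EuclideanSpace.single i 1⟫
        = ‖g‖ * ⟪Wd (EuclideanSpace.single i 1), EuclideanSpace.single i 1⟫
          + F' (EuclideanSpace.single i 1) * (W x i) := by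
      intro i
      simp only [ContinuousLinearMap.add_apply, ContinuousLinearMap.smul_apply,
        ContinuousLinearMap.smulRight_apply, inner_add_left, real_inner_smul_left]
      rw [EuclideanSpace.inner_single_right]
      simp [mul_comm, EuclideanSpace.inner_single_right]
    rw [Finset.sum_congr rfl (fun i _ => this i), Finset.sum_add_distrib, ← Finset.mul_sum]
    congr 1
    have : F' (W x) = F' (∑ i, (W x i) • EuclideanSpace.single i (1:ℝ)) := by
      rw [euclidean_sum_single]
    rw [this, map_sum]
    simp [mul_comm]
  -- rewrite ediv W x using hdiv
  have hedivW : ediv W x = ‖g‖⁻¹ * (‖g‖⁻¹ * ⟪Wd g, g⟫) := by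
    have := hdiv x
    rw [sub_eq_zero] at this
    rw [this, hν x, real_inner_smul_right, ← hWdx]
    rw [map_smul, real_inner_smul_left]
  -- the key cancellation
  have hkey : ⟪Gx (W x), g⟫ = -⟪Wd g, g⟫ := by
    have h1 := htand g
    have h2 : ⟪W x, Gx g⟫ = ⟪Gx (W x), g⟫ := by
      rw [real_inner_comm, hGinner, hGinner, hsymm]
    linarith [h1, h2.symm]
  rw [hediv, hedivW, hF'app]
  rw [hkey]
  field_simp
  ring
end
end

section
/- Let u₀, u₁ : EuclideanSpace ℝ (Fin 3) → ℝ be smooth functions whose gradients ∇u₀(x) and ∇u₁(x) are linearly independent at every point x. Set ν(x) = ∇u₀(x)/‖∇u₀(x)‖, Z₁(x) = ∇u₁(x) − ⟨∇u₁(x), ν(x)⟩ ν(x), and Z₀(x) = ‖Z₁(x)‖ ∇u₀(x). Define Y₀ = Z₀, Y₁(x) = ‖∇u₀(x)‖ Z₁(x), and Y₂(x) = ∇u₀(x) × ∇u₁(x) (cross product in ℝ³). Then: (i) at every point, Y₀, Y₁, Y₂ are pairwise orthogonal and ‖Y₀(x)‖ = ‖Y₁(x)‖ = ‖Y₂(x)‖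 = ‖Z₀(x)‖; (ii) div Y₂ = 0 everywhere; and (iii) if in addition div Z₀ = 0 and div Z₁ − ⟨(fderiv ℝ Z₁ x)(ν(x)), ν(x)⟩ = 0 hold everywhere, then also div Y₀ = 0 and div Y₁ = 0 everywhere. -/
open scoped RealInnerProductSpace

noncomputable section

/-- Identification of `Fin 3 → ℝ` with three-dimensional Euclidean space. -/
def toE3 : (Fin 3 → ℝ) → EuclideanSpace ℝ (Fin 3) :=
  (EuclideanSpace.equiv (Fin 3) ℝ).symm

namespace PODFAux

open Matrix

lemma inner_gradient {F : Type*} [NormedAddCommGroup F] [InnerProductSpace ℝ F]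
    [CompleteSpace F] (u : F → ℝ) (x v : F) : ⟪gradient u x, v⟫ = fderiv ℝ u x v := by
  simp [gradient, InnerProductSpace.toDual_symm_apply]

lemma sum_smul_single {n : ℕ} (w : EuclideanSpace ℝ (Fin n)) :
    ∑ i, w i • EuclideanSpace.single i (1:ℝ) = w := by
  ext j
  simp [Pi.single_apply]

lemma grad_eq {n : ℕ} (u : EuclideanSpace ℝ (Fin n) → ℝ) :
    gradient u = fun y => ∑ k, (fderiv ℝ u y (EuclideanSpace.single k 1)) •
      EuclideanSpace.single k (1:ℝ) := by
  funext y
  rw [← sum_smul_single (gradient u y)]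
  congr 1; funext k
  congr 1
  rw [← inner_gradient]
  simp only [EuclideanSpace.inner_single_right]
  simp

lemma grad_diff {n : ℕ} {u : EuclideanSpace ℝ (Fin n) → ℝ} (hu : ContDiff ℝ (⊤ : ℕ∞) u) :
    Differentiable ℝ (gradient u) := by
  rw [grad_eq]
  have h1 : ContDiff ℝ 1 (fderiv ℝ u) := hu.fderiv_right (by exact WithTop.coe_le_coe.mpr le_top)
  exact Differentiable.fun_sum fun k _ =>
    ((h1.differentiable one_ne_zero).clm_apply (differentiable_const _)).smul_const _

lemma grad_symm {n : ℕ} {u : EuclideanSpace ℝ (Fin n) → ℝ} (hu : ContDiff ℝ (⊤ : ℕ∞) u)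
    (x v w : EuclideanSpace ℝ (Fin n)) :
    ⟪fderiv ℝ (gradient u) x v, w⟫ = ⟪fderiv ℝ (gradient u) x w, v⟫ := by
  have h1 : ContDiff ℝ 1 (fderiv ℝ u) := hu.fderiv_right (by exact WithTop.coe_le_coe.mpr le_top)
  have hd := (grad_diff hu) x
  have key : ∀ a b : EuclideanSpace ℝ (Fin n),
      ⟪fderiv ℝ (gradient u) x a, b⟫ = fderiv ℝ (fderiv ℝ u) x a b := by
    intro a b
    have h2 : fderiv ℝ (fun y => ⟪gradient u y, b⟫) x a = ⟪fderiv ℝ (gradient u) x a, b⟫ := by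
      rw [fderiv_inner_apply ℝ hd (differentiableAt_const b) a]
      simp
    have h3 : (fun y => ⟪gradient u y, b⟫) = fun y => fderiv ℝ u y b := by
      funext y; rw [inner_gradient]
    rw [← h2, h3, fderiv_clm_apply ((h1.differentiable one_ne_zero) x) (differentiableAt_const b)]
    simp
  rw [key, key]
  exact hu.contDiffAt.isSymmSndFDerivAt (by simp; exact WithTop.coe_le_coe.mpr (le_top : (2:ℕ∞) ≤ ⊤)) v w

lemma toE3_apply (w : Fin 3 → ℝ) (i : Fin 3) : toE3 w i = w i := rfl

lemma inner_toE3 (v : EuclideanSpace ℝ (Fin 3)) (w : Fin 3 → ℝ) :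
    ⟪v, toE3 w⟫ = dotProduct (fun i => v i) w := by
  simp [toE3, PiLp.inner_apply, dotProduct, mul_comm]

lemma inner_toE3_toE3 (w w' : Fin 3 → ℝ) : ⟪toE3 w, toE3 w'⟫ = dotProduct w w' :=
  inner_toE3 (toE3 w) w'

lemma dot_eq_inner (v w : EuclideanSpace ℝ (Fin 3)) :
    dotProduct (fun i => v i) (fun i => w i) = ⟪v, w⟫ := by
  simp [PiLp.inner_apply, dotProduct, mul_comm]

lemma fderiv_inner_const {F : Type*} [NormedAddCommGroup F] [InnerProductSpace ℝ F]
    {G : Type*} [NormedAddCommGroup G] [NormedSpace ℝ G]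
    {V : G → F} {x : G} (hV : DifferentiableAt ℝ V x) (w : F) (v : G) :
    fderiv ℝ (fun y => ⟪V y, w⟫) x v = ⟪fderiv ℝ V x v, w⟫ := by
  rw [fderiv_inner_apply ℝ hV (differentiableAt_const w) v]
  simp

end PODFAux

open PODFAux Matrix

/-- The three vector fields `Y₀ = Z₀`, `Y₁ = ‖∇u₀‖ Z₁`, `Y₂ = ∇u₀ × ∇u₁` are pairwise
orthogonal of equal length `‖Z₀‖`; `Y₂` is always divergence free, and if moreover `Z₀`
is divergence free and `Z₁` is tangentially divergence free, then so are `Y₀` and `Y₁`. -/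
theorem pairwise_orthogonal_divergence_free_fields
    (u₀ u₁ : EuclideanSpace ℝ (Fin 3) → ℝ)
    (hu₀ : ContDiff ℝ (⊤ : ℕ∞) u₀) (hu₁ : ContDiff ℝ (⊤ : ℕ∞) u₁)
    (hind : ∀ x, LinearIndependent ℝ ![gradient u₀ x, gradient u₁ x])
    (ν Z₁ Z₀ Y₀ Y₁ Y₂ : EuclideanSpace ℝ (Fin 3) → EuclideanSpace ℝ (Fin 3))
    (hν : ∀ x, ν x = ‖gradient u₀ x‖⁻¹ • gradient u₀ x)
    (hZ₁ : ∀ x, Z₁ x = gradient u₁ x - ⟪gradient u₁ x, ν x⟫ • ν x)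
    (hZ₀ : ∀ x, Z₀ x = ‖Z₁ x‖ • gradient u₀ x)
    (hY₀ : ∀ x, Y₀ x = Z₀ x)
    (hY₁ : ∀ x, Y₁ x = ‖gradient u₀ x‖ • Z₁ x)
    (hY₂ : ∀ x, Y₂ x = toE3 (crossProduct
      (fun i => gradient u₀ x i) (fun i => gradient u₁ x i))) :
    (∀ x, ⟪Y₀ x, Y₁ x⟫ = 0 ∧ ⟪Y₀ x, Y₂ x⟫ = 0 ∧ ⟪Y₁ x, Y₂ x⟫ = 0 ∧
      ‖Y₀ x‖ = ‖Z₀ x‖ ∧ ‖Y₁ x‖ = ‖Z₀ x‖ ∧ ‖Y₂ x‖ = ‖Z₀ x‖) ∧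
    (∀ x, ediv Y₂ x = 0) ∧
    ((∀ x, ediv Z₀ x = 0) → (∀ x, ediv Z₁ x - ⟪fderiv ℝ Z₁ x (ν x), ν x⟫ = 0) →
      (∀ x, ediv Y₀ x = 0) ∧ (∀ x, ediv Y₁ x = 0)) := by
  classical
  have hg₀d : Differentiable ℝ (gradient u₀) := grad_diff hu₀
  have hg₁d : Differentiable ℝ (gradient u₁) := grad_diff hu₁
  have hg₀ne : ∀ x, gradient u₀ x ≠ 0 := by
    intro x
    have := (hind x).ne_zero 0
    simpa using this
  have hn : ∀ x, ‖gradient u₀ x‖ ≠ 0 := fun x => norm_ne_zero_iff.2 (hg₀ne x)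
  -- `Z₁` is orthogonal to `∇u₀`
  have hZg : ∀ x, ⟪Z₁ x, gradient u₀ x⟫ = 0 := by
    intro x
    rw [hZ₁ x, hν x]
    simp only [inner_sub_left, real_inner_smul_left, real_inner_smul_right,
      real_inner_self_eq_norm_sq]
    generalize (inner ℝ (gradient u₁ x) (gradient u₀ x) : ℝ) = t
    field_simp [hn x]
    ring
  -- a normal form for `Z₁`
  have hZform : ∀ x, Z₁ x = gradient u₁ x -
      (⟪gradient u₁ x, gradient u₀ x⟫ / ‖gradient u₀ x‖ ^ 2) • gradient u₀ x := by
    intro x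
    rw [hZ₁ x, hν x, real_inner_smul_right, smul_smul]
    congr 2
    field_simp
  refine ⟨?_, ?_, ?_⟩
  · -- part (i)
    intro x
    refine ⟨?_, ?_, ?_, ?_, ?_, ?_⟩
    · rw [hY₀ x, hZ₀ x, hY₁ x, real_inner_smul_left, real_inner_smul_right,
        real_inner_comm, hZg x]
      ring
    · rw [hY₀ x, hZ₀ x, hY₂ x, real_inner_smul_left, inner_toE3, dot_self_cross]
      ring
    · rw [hY₁ x, hY₂ x, real_inner_smul_left, hZform x, inner_sub_left,
        real_inner_smul_left, inner_toE3, inner_toE3, dot_self_cross, dot_cross_self]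
      ring
    · rw [hY₀ x]
    · rw [hY₁ x, hZ₀ x, norm_smul, norm_smul, norm_norm, norm_norm]
      ring
    · have h2 : ‖Y₂ x‖ ^ 2 = ‖Z₀ x‖ ^ 2 := by
        rw [← real_inner_self_eq_norm_sq, ← real_inner_self_eq_norm_sq, hY₂ x, hZ₀ x,
          inner_toE3_toE3, cross_dot_cross, real_inner_smul_left, real_inner_smul_right,
          dot_eq_inner, dot_eq_inner, dot_eq_inner, dot_eq_inner]
        have hZsq : ‖Z₁ x‖ * ‖Z₁ x‖ = ⟪Z₁ x, Z₁ x⟫ :=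
          (real_inner_self_eq_norm_mul_norm _).symm
        have hZZ : ⟪Z₁ x, Z₁ x⟫ = ⟪gradient u₁ x, gradient u₁ x⟫ -
            ⟪gradient u₁ x, gradient u₀ x⟫ ^ 2 / ‖gradient u₀ x‖ ^ 2 := by
          nth_rewrite 1 [hZform x]
          rw [inner_sub_left, real_inner_smul_left,
            real_inner_comm (Z₁ x) (gradient u₀ x), hZg x, mul_zero, sub_zero]
          rw [hZform x, inner_sub_right, real_inner_smul_right]
          ring
        rw [← mul_assoc, hZsq, hZZ, real_inner_comm (gradient u₁ x) (gradient u₀ x),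
          real_inner_self_eq_norm_sq (x := gradient u₀ x)]
        generalize (inner ℝ (gradient u₁ x) (gradient u₀ x) : ℝ) = t
        generalize (inner ℝ (gradient u₁ x) (gradient u₁ x) : ℝ) = p
        field_simp [hn x]
      calc ‖Y₂ x‖ = Real.sqrt (‖Y₂ x‖ ^ 2) := (Real.sqrt_sq (norm_nonneg _)).symm
        _ = Real.sqrt (‖Z₀ x‖ ^ 2) := by rw [h2]
        _ = ‖Z₀ x‖ := Real.sqrt_sq (norm_nonneg _)
  · -- part (ii): `Y₂` is divergence free
    intro x
    have hq : ∀ k : Fin 3, (fun y => ⟪gradient u₀ y, EuclideanSpace.single k (1:ℝ)⟫) =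
        fun y => gradient u₀ y k := by
      intro k; funext y; simp only [EuclideanSpace.inner_single_right]; simp
    have hr : ∀ k : Fin 3, (fun y => ⟪gradient u₁ y, EuclideanSpace.single k (1:ℝ)⟫) =
        fun y => gradient u₁ y k := by
      intro k; funext y; simp only [EuclideanSpace.inner_single_right]; simp
    have hqd : ∀ k, DifferentiableAt ℝ (fun y => gradient u₀ y k) x := by
      intro k; rw [← hq]; exact (hg₀d x).inner ℝ (differentiableAt_const _)
    have hrd : ∀ k, DifferentiableAt ℝ (fun y => gradient u₁ y k) x := by
      intro k; rw [← hr]; exact (hg₁d x).inner ℝ (differentiableAt_const _)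
    have hqf : ∀ k v, fderiv ℝ (fun y => gradient u₀ y k) x v =
        ⟪fderiv ℝ (gradient u₀) x v, EuclideanSpace.single k 1⟫ := by
      intro k v; rw [← hq, fderiv_inner_const (hg₀d x)]
    have hrf : ∀ k v, fderiv ℝ (fun y => gradient u₁ y k) x v =
        ⟪fderiv ℝ (gradient u₁) x v, EuclideanSpace.single k 1⟫ := by
      intro k v; rw [← hr, fderiv_inner_const (hg₁d x)]
    have hY₂d : DifferentiableAt ℝ Y₂ x := by
      have : Y₂ = fun y => toE3 (crossProduct
          (fun i => gradient u₀ y i) (fun i => gradient u₁ y i)) := funext hY₂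
      rw [this]
      apply DifferentiableAt.comp (g := toE3)
      · exact (EuclideanSpace.equiv (Fin 3) ℝ).symm.differentiable.differentiableAt
      · rw [differentiableAt_pi]
        intro i
        fin_cases i <;> simp only [cross_apply, Matrix.cons_val_zero, Matrix.cons_val_one, Matrix.head_cons, Matrix.cons_val_two, Matrix.tail_cons] <;>
          exact ((hqd _).mul (hrd _)).sub ((hqd _).mul (hrd _))
    have comp : ∀ (i : Fin 3) v, ⟪fderiv ℝ Y₂ x v, EuclideanSpace.single i (1:ℝ)⟫ =
        fderiv ℝ (fun y => ⟪Y₂ y, EuclideanSpace.single i (1:ℝ)⟫) x v :=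
      fun i v => (fderiv_inner_const hY₂d _ v).symm
    have hYc : ∀ i : Fin 3, (fun y => ⟪Y₂ y, EuclideanSpace.single i (1:ℝ)⟫) =
        fun y => crossProduct (fun j => gradient u₀ y j) (fun j => gradient u₁ y j) i := by
      intro i; funext y; rw [hY₂ y]; simp [EuclideanSpace.inner_single_right, toE3_apply]
    have hYc0 : (fun y => ⟪Y₂ y, EuclideanSpace.single (0 : Fin 3) (1:ℝ)⟫) =
        fun y => gradient u₀ y 1 * gradient u₁ y 2 - gradient u₀ y 2 * gradient u₁ y 1 := by
      rw [hYc 0]; funext y; simp [cross_apply]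
    have hYc1 : (fun y => ⟪Y₂ y, EuclideanSpace.single (1 : Fin 3) (1:ℝ)⟫) =
        fun y => gradient u₀ y 2 * gradient u₁ y 0 - gradient u₀ y 0 * gradient u₁ y 2 := by
      rw [hYc 1]; funext y; simp [cross_apply]
    have hYc2 : (fun y => ⟪Y₂ y, EuclideanSpace.single (2 : Fin 3) (1:ℝ)⟫) =
        fun y => gradient u₀ y 0 * gradient u₁ y 1 - gradient u₀ y 1 * gradient u₁ y 0 := by
      rw [hYc 2]; funext y; simp [cross_apply]
    set S₀ : Fin 3 → Fin 3 → ℝ := fun v k =>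
      ⟪fderiv ℝ (gradient u₀) x (EuclideanSpace.single v 1), EuclideanSpace.single k 1⟫ with hS₀
    set S₁ : Fin 3 → Fin 3 → ℝ := fun v k =>
      ⟪fderiv ℝ (gradient u₁) x (EuclideanSpace.single v 1), EuclideanSpace.single k 1⟫ with hS₁
    have h0 : ∀ a b : Fin 3, S₀ a b = S₀ b a := fun a b => grad_symm hu₀ x _ _
    have h1 : ∀ a b : Fin 3, S₁ a b = S₁ b a := fun a b => grad_symm hu₁ x _ _
    rw [ediv, Fin.sum_univ_three, comp 0, comp 1, comp 2, hYc0, hYc1, hYc2,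
      fderiv_fun_sub ((hqd 1).fun_mul (hrd 2)) ((hqd 2).fun_mul (hrd 1)),
      fderiv_fun_sub ((hqd 2).fun_mul (hrd 0)) ((hqd 0).fun_mul (hrd 2)),
      fderiv_fun_sub ((hqd 0).fun_mul (hrd 1)) ((hqd 1).fun_mul (hrd 0)),
      fderiv_fun_mul (hqd 1) (hrd 2), fderiv_fun_mul (hqd 2) (hrd 1),
      fderiv_fun_mul (hqd 2) (hrd 0), fderiv_fun_mul (hqd 0) (hrd 2),
      fderiv_fun_mul (hqd 0) (hrd 1), fderiv_fun_mul (hqd 1) (hrd 0)]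
    simp only [ContinuousLinearMap.sub_apply, ContinuousLinearMap.add_apply,
      ContinuousLinearMap.smul_apply, smul_eq_mul, hqf, hrf, ← hS₀, ← hS₁]
    linear_combination (gradient u₁ x 2) * h0 0 1 + (gradient u₁ x 0) * h0 1 2 +
      (gradient u₁ x 1) * h0 2 0 + (gradient u₀ x 1) * h1 0 2 +
      (gradient u₀ x 2) * h1 1 0 + (gradient u₀ x 0) * h1 2 1
  · -- part (iii)
    intro hd0 hd1
    constructor
    · intro x
      have : Y₀ = Z₀ := funext hY₀
      rw [this]; exact hd0 x
    · intro x
      have hZd : Differentiable ℝ Z₁ := by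
        have hZfun : Z₁ = fun y => gradient u₁ y -
            (⟪gradient u₁ y, gradient u₀ y⟫ * (⟪gradient u₀ y, gradient u₀ y⟫)⁻¹) •
              gradient u₀ y := by
          funext y
          rw [hZform y, real_inner_self_eq_norm_sq, div_eq_mul_inv]
        rw [hZfun]
        intro y
        have hden : ⟪gradient u₀ y, gradient u₀ y⟫ ≠ 0 := by
          rw [real_inner_self_eq_norm_sq]
          exact pow_ne_zero _ (hn y)
        have ha : DifferentiableAt ℝ (fun y => (⟪gradient u₁ y, gradient u₀ y⟫ : ℝ)) y :=
          (hg₁d y).inner ℝ (hg₀d y)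
        have hb : DifferentiableAt ℝ (fun y => (⟪gradient u₀ y, gradient u₀ y⟫ : ℝ)) y :=
          (hg₀d y).inner ℝ (hg₀d y)
        have hq : DifferentiableAt ℝ (fun y => (⟪gradient u₁ y, gradient u₀ y⟫ : ℝ) *
            (⟪gradient u₀ y, gradient u₀ y⟫ : ℝ)⁻¹) y := ha.mul (hb.inv hden)
        exact (hg₁d y).sub (hq.smul (hg₀d y))
      have hipne : ⟪gradient u₀ x, gradient u₀ x⟫ ≠ 0 := by
        rw [real_inner_self_eq_norm_sq]
        exact pow_ne_zero _ (hn x)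
      have hsq := (((hg₀d x).hasFDerivAt.inner ℝ (hg₀d x).hasFDerivAt).sqrt hipne)
      have hfun : (fun y => Real.sqrt ⟪gradient u₀ y, gradient u₀ y⟫) =
          fun y => ‖gradient u₀ y‖ := by
        funext y; rw [real_inner_self_eq_norm_sq, Real.sqrt_sq (norm_nonneg _)]
      rw [hfun] at hsq
      set N := (1 / (2 * Real.sqrt ⟪gradient u₀ x, gradient u₀ x⟫)) •
        ((fderivInnerCLM ℝ (gradient u₀ x, gradient u₀ x)).comp
          ((fderiv ℝ (gradient u₀) x).prod (fderiv ℝ (gradient u₀) x))) with hN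
      have hNval : ∀ v, N v = ‖gradient u₀ x‖⁻¹ *
          ⟪fderiv ℝ (gradient u₀) x v, gradient u₀ x⟫ := by
        intro v
        rw [hN]
        simp only [ContinuousLinearMap.smul_apply, ContinuousLinearMap.comp_apply,
          ContinuousLinearMap.prod_apply, fderivInnerCLM_apply, smul_eq_mul]
        rw [real_inner_self_eq_norm_sq, Real.sqrt_sq (norm_nonneg _),
          real_inner_comm (fderiv ℝ (gradient u₀) x v) (gradient u₀ x)]
        generalize (inner ℝ (fderiv ℝ (gradient u₀) x v) (gradient u₀ x) : ℝ) = t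
        field_simp
        ring
      have hY₁fun : Y₁ = fun y => ‖gradient u₀ y‖ • Z₁ y := funext hY₁
      have hY₁at : HasFDerivAt Y₁ (‖gradient u₀ x‖ • fderiv ℝ Z₁ x + N.smulRight (Z₁ x)) x := by
        rw [hY₁fun]
        exact hsq.smul (hZd x).hasFDerivAt
      have hfY₁ := hY₁at.fderiv
      have hrel : ∀ v, ⟪fderiv ℝ Z₁ x v, gradient u₀ x⟫ =
          - ⟪Z₁ x, fderiv ℝ (gradient u₀) x v⟫ := by
        intro v
        have hzero : (fun y => ⟪Z₁ y, gradient u₀ y⟫) = fun _ => (0:ℝ) := funext hZg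
        have h1 : fderiv ℝ (fun y => ⟪Z₁ y, gradient u₀ y⟫) x v = 0 := by
          rw [hzero]; simp
        rw [fderiv_inner_apply ℝ (hZd x) (hg₀d x) v] at h1
        linarith
      -- value of `ediv Z₁ x` from the hypothesis
      have hdiv : ediv Z₁ x = ⟪fderiv ℝ Z₁ x (ν x), ν x⟫ := by
        have := hd1 x; linarith
      have hBval : ⟪fderiv ℝ Z₁ x (ν x), ν x⟫ = ‖gradient u₀ x‖⁻¹ * (‖gradient u₀ x‖⁻¹ *
          ⟪fderiv ℝ Z₁ x (gradient u₀ x), gradient u₀ x⟫) := by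
        rw [hν x, ContinuousLinearMap.map_smul, real_inner_smul_left, real_inner_smul_right]
      -- compute the divergence of Y₁
      have hNsum : N (Z₁ x) = ∑ i, N (EuclideanSpace.single i 1) * Z₁ x i := by
        conv_lhs => rw [← sum_smul_single (Z₁ x)]
        rw [map_sum]
        exact Finset.sum_congr rfl fun i _ => by
          rw [ContinuousLinearMap.map_smul, smul_eq_mul, mul_comm]
      have hsum : ediv Y₁ x = ‖gradient u₀ x‖ * ediv Z₁ x + N (Z₁ x) := by
        rw [ediv, hfY₁]
        simp only [ContinuousLinearMap.add_apply, ContinuousLinearMap.smul_apply,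
          ContinuousLinearMap.smulRight_apply, inner_add_left, real_inner_smul_left]
        rw [Finset.sum_add_distrib, ediv, Finset.mul_sum, hNsum]
        congr 1
        exact Finset.sum_congr rfl fun i _ => by
          rw [show ⟪Z₁ x, EuclideanSpace.single i (1:ℝ)⟫ = Z₁ x i by simp only [EuclideanSpace.inner_single_right]; simp]
      rw [hsum, hdiv, hBval, hNval, hrel (gradient u₀ x),
        grad_symm hu₀ x (Z₁ x) (gradient u₀ x),
        real_inner_comm (fderiv ℝ (gradient u₀) x (gradient u₀ x)) (Z₁ x)]
      have hs := hn x
      generalize (inner ℝ (fderiv ℝ (gradient u₀) x (gradient u₀ x)) (Z₁ x) : ℝ) = t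
      generalize ‖gradient u₀ x‖ = s at hs ⊢
      have hkey : s * (s⁻¹ * (s⁻¹ * -t)) + s⁻¹ * t = s⁻¹ * (t - (s * s⁻¹) * t) := by ring
      rw [hkey, mul_inv_cancel₀ hs, one_mul, sub_self, mul_zero]
end
end

section
/- Let a, b, c, d : EuclideanSpace ℝ (Fin 3) → ℝ be differentiable functions and let ψ : EuclideanSpace ℝ (Fin 3) → (Fin 2 → ℂ) be given by ψ = (a + b·I, c + d·I). Then the Dirac equation D̸ψ = 0 (i.e. Σ_{k=1}^{3} e_k.mulVec (∂_k ψ(x)) = 0 for all x) holds if and only if the four vector fields (−d, c, −b), (c, d, a), (−b, −a, d), and (a, −b, −c) on ℝ³ are all divergence free. -/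
open scoped RealInnerProductSpace
open Complex Matrix

noncomputable section

/-- The Pauli matrices. -/
def pauli : Fin 3 → Matrix (Fin 2) (Fin 2) ℂ :=
  ![!![0, 1; 1, 0], !![0, -I; I, 0], !![1, 0; 0, -1]]

/-- Clifford multiplication: `e_k = I • σ_k`. -/
def cliff (k : Fin 3) : Matrix (Fin 2) (Fin 2) ℂ := I • pauli k

/-- The Dirac operator on spinors over flat `ℝ³`:
`(D̸ψ)(x) = Σ_k e_k.mulVec (∂_k ψ(x))`. -/
def dirac (ψ : EuclideanSpace ℝ (Fin 3) → (Fin 2 → ℂ)) (x : EuclideanSpace ℝ (Fin 3)) :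
    Fin 2 → ℂ :=
  ∑ k, (cliff k).mulVec (fderiv ℝ ψ x (EuclideanSpace.single k 1))

namespace DiracAux

abbrev E3 := EuclideanSpace ℝ (Fin 3)

/-- partial derivative in the k-th coordinate direction -/
def pd (k : Fin 3) (f : E3 → ℝ) (x : E3) : ℝ :=
  fderiv ℝ f x (EuclideanSpace.single k 1)

lemma cfd (f g : E3 → ℝ) (hf : Differentiable ℝ f) (hg : Differentiable ℝ g) (x v : E3) :
    fderiv ℝ (fun x => (f x : ℂ) + (g x : ℂ) * I) x v
      = (fderiv ℝ f x v : ℂ) + (fderiv ℝ g x v) * I := by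
  have hf' : HasFDerivAt (fun x => (f x : ℂ)) (Complex.ofRealCLM.comp (fderiv ℝ f x)) x :=
    Complex.ofRealCLM.hasFDerivAt.comp x (hf x).hasFDerivAt
  have hg' : HasFDerivAt (fun x => (g x : ℂ)) (Complex.ofRealCLM.comp (fderiv ℝ g x)) x :=
    Complex.ofRealCLM.hasFDerivAt.comp x (hg x).hasFDerivAt
  rw [HasFDerivAt.fderiv (f := fun x => (f x : ℂ) + (g x : ℂ) * I) (hf'.add (hg'.mul_const I))]
  simp [mul_comm]

lemma cfdDiff (f g : E3 → ℝ) (hf : Differentiable ℝ f) (hg : Differentiable ℝ g) :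
    Differentiable ℝ (fun x => (f x : ℂ) + (g x : ℂ) * I) := by
  intro x
  have hf' : HasFDerivAt (fun x => (f x : ℂ)) (Complex.ofRealCLM.comp (fderiv ℝ f x)) x :=
    Complex.ofRealCLM.hasFDerivAt.comp x (hf x).hasFDerivAt
  have hg' : HasFDerivAt (fun x => (g x : ℂ)) (Complex.ofRealCLM.comp (fderiv ℝ g x)) x :=
    Complex.ofRealCLM.hasFDerivAt.comp x (hg x).hasFDerivAt
  exact (hf'.add (hg'.mul_const I)).differentiableAt

lemma ediv_eq (f g h : E3 → ℝ) (hf : Differentiable ℝ f) (hg : Differentiable ℝ g)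
    (hh : Differentiable ℝ h) (x : E3) :
    ediv (fun y => toE3 ![f y, g y, h y]) x = pd 0 f x + pd 1 g x + pd 2 h x := by
  have hV : DifferentiableAt ℝ (fun y => toE3 ![f y, g y, h y]) x := by
    apply ((EuclideanSpace.equiv (Fin 3) ℝ).symm.differentiable.comp ?_).differentiableAt
    rw [differentiable_pi]
    intro i
    fin_cases i <;> simp [hf, hg, hh]
  have key : ∀ (u : E3) (i : Fin 3),
      (fderiv ℝ (fun y => toE3 ![f y, g y, h y]) x u) i
        = fderiv ℝ (fun y => ![f y, g y, h y] i) x u := by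
    intro u i
    have h1 : (fun y => (![f y, g y, h y] : Fin 3 → ℝ) i)
        = fun y => (EuclideanSpace.proj i) ((fun y => toE3 ![f y, g y, h y]) y) := rfl
    rw [h1]
    have h2 := ((EuclideanSpace.proj i).hasFDerivAt
      (x := (fun y => toE3 ![f y, g y, h y]) x)).comp x hV.hasFDerivAt
    have h3 : fderiv ℝ (fun y => (EuclideanSpace.proj i) ((fun y => toE3 ![f y, g y, h y]) y)) x
        = (EuclideanSpace.proj i).comp (fderiv ℝ (fun y => toE3 ![f y, g y, h y]) x) := h2.fderiv
    rw [h3]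
    rfl
  unfold ediv
  rw [Fin.sum_univ_three]
  simp only [EuclideanSpace.inner_single_right, RCLike.star_def, conj_trivial, one_mul, key]
  simp [pd]

end DiracAux

open DiracAux in
/-- For `ψ = (a + bI, c + dI)`, the Dirac equation `D̸ψ = 0` holds iff the four vector
fields `(−d, c, −b)`, `(c, d, a)`, `(−b, −a, d)` and `(a, −b, −c)` are divergence free. -/
theorem dirac_eq_iff_four_div_free
    (a b c d : EuclideanSpace ℝ (Fin 3) → ℝ)
    (ha : Differentiable ℝ a) (hb : Differentiable ℝ b)
    (hc : Differentiable ℝ c) (hd : Differentiable ℝ d)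
    (ψ : EuclideanSpace ℝ (Fin 3) → (Fin 2 → ℂ))
    (hψ : ∀ x, ψ x = ![(a x : ℂ) + (b x : ℂ) * I, (c x : ℂ) + (d x : ℂ) * I]) :
    (∀ x, dirac ψ x = 0) ↔
      ((∀ x, ediv (fun y => toE3 ![-(d y), c y, -(b y)]) x = 0) ∧
       (∀ x, ediv (fun y => toE3 ![c y, d y, a y]) x = 0) ∧
       (∀ x, ediv (fun y => toE3 ![-(b y), -(a y), d y]) x = 0) ∧
       (∀ x, ediv (fun y => toE3 ![a y, -(b y), -(c y)]) x = 0)) := by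
  obtain rfl : ψ = fun x => ![(a x : ℂ) + (b x : ℂ) * I, (c x : ℂ) + (d x : ℂ) * I] :=
    funext hψ
  set ψ : E3 → (Fin 2 → ℂ) :=
    fun x => ![(a x : ℂ) + (b x : ℂ) * I, (c x : ℂ) + (d x : ℂ) * I] with hψdef
  -- component derivatives of ψ
  have hfd : ∀ (x : E3) (k : Fin 3) (i : Fin 2),
      fderiv ℝ ψ x (EuclideanSpace.single k 1) i
        = ![(pd k a x : ℂ) + (pd k b x : ℂ) * I, (pd k c x : ℂ) + (pd k d x : ℂ) * I] i := by
    intro x k i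
    have hpi : fderiv ℝ ψ x = ContinuousLinearMap.pi
        (fun i => fderiv ℝ (fun x => ψ x i) x) := by
      apply fderiv_pi
      intro i
      fin_cases i
      · exact (cfdDiff a b ha hb x)
      · exact (cfdDiff c d hc hd x)
    rw [hpi]
    fin_cases i
    · exact cfd a b ha hb x _
    · exact cfd c d hc hd x _
  have hdirac : ∀ x : E3, dirac ψ x
      = ![((-(pd 0 d x) + pd 1 c x - pd 2 b x : ℝ) : ℂ)
            + ((pd 0 c x + pd 1 d x + pd 2 a x : ℝ) : ℂ) * I,
          ((-(pd 0 b x) - pd 1 a x + pd 2 d x : ℝ) : ℂ)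
            + ((pd 0 a x - pd 1 b x - pd 2 c x : ℝ) : ℂ) * I] := by
    intro x
    unfold dirac
    rw [Fin.sum_univ_three]
    funext i
    fin_cases i <;>
    · simp only [Fin.isValue, Pi.add_apply, Matrix.mulVec, dotProduct,
        Fin.sum_univ_two, cliff, pauli, hfd]
      simp [Complex.ext_iff]
      try (ring_nf; simp [Complex.ext_iff])
      try ring
  have main : ∀ x : E3, dirac ψ x = 0 ↔
      (ediv (fun y => toE3 ![-(d y), c y, -(b y)]) x = 0 ∧
       ediv (fun y => toE3 ![c y, d y, a y]) x = 0 ∧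
       ediv (fun y => toE3 ![-(b y), -(a y), d y]) x = 0 ∧
       ediv (fun y => toE3 ![a y, -(b y), -(c y)]) x = 0) := by
    intro x
    rw [hdirac x,
      ediv_eq (fun y => -(d y)) c (fun y => -(b y)) hd.neg hc hb.neg x, ediv_eq _ _ _ hc hd ha x,
      ediv_eq (fun y => -(b y)) (fun y => -(a y)) d hb.neg ha.neg hd x,
      ediv_eq a (fun y => -(b y)) (fun y => -(c y)) ha hb.neg hc.neg x]
    have hpdneg : ∀ (k : Fin 3) (f : E3 → ℝ), Differentiable ℝ f →
        ∀ y : E3, pd k (fun z => -(f z)) y = -(pd k f y) := by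
      intro k f hf y
      simp [pd, fderiv_neg]
    rw [hpdneg 0 d hd x, hpdneg 2 b hb x, hpdneg 0 b hb x, hpdneg 1 a ha x,
      hpdneg 1 b hb x, hpdneg 2 c hc x]
    constructor
    · intro h
      have h0 := congrFun h 0
      have h1 := congrFun h 1
      simp [Complex.ext_iff] at h0 h1
      refine ⟨by linarith [h0.1], by linarith [h0.2], by linarith [h1.1], by linarith [h1.2]⟩
    · intro ⟨h1, h2, h3, h4⟩
      funext i
      fin_cases i <;> simp [Complex.ext_iff] <;> constructor <;> linarith
  calc (∀ x, dirac ψ x = 0) ↔ _ := forall_congr' main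
    _ ↔ _ := by rw [forall_and, forall_and, forall_and]
end
end

section
/- Let ψ : EuclideanSpace ℝ (Fin 3) → (Fin 2 → ℂ) be a C¹ map and define the Dirac current X : EuclideanSpace ℝ (Fin 3) → ℂ³ by X_k(x) = ⟨I • (e_k.mulVec ψ(x)), ψ(x)⟩, where ⟨·,·⟩ is the standard Hermitian inner product on ℂ² (conjugate-linear in the first argument). Then: (i) each X_k(x) is real (its imaginary part vanishes), so X defines a real vector field on ℝ³; and (ii) div X(x) = 2 Re ⟨I • (D̸ψ)(x), ψ(x)⟩ for every x. In particular, if D̸ψ = 0 then div X = 0. -/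
open scoped RealInnerProductSpace
open Complex Matrix

noncomputable section

/-- The standard Hermitian inner product on `ℂ²`, conjugate-linear in the first argument. -/
def herm (v w : Fin 2 → ℂ) : ℂ := ∑ j, starRingEnd ℂ (v j) * w j

abbrev E3 := EuclideanSpace ℝ (Fin 3)

lemma key1 (k : Fin 3) (a : Fin 2 → ℂ) :
    (herm (I • (cliff k).mulVec a) a).im = 0 := by
  fin_cases k <;>
  · simp [herm, cliff, pauli, Matrix.mulVec, dotProduct, Matrix.vecHead, Matrix.vecTail, Fin.sum_univ_two,
      Pi.smul_apply, smul_eq_mul, Complex.add_im, Complex.mul_im, Complex.mul_re,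
      Complex.conj_re, Complex.conj_im, Complex.I_re, Complex.I_im]
    ring

lemma key2 (k : Fin 3) (a b : Fin 2 → ℂ) :
    (herm (I • (cliff k).mulVec a) b).re = (herm (I • (cliff k).mulVec b) a).re := by
  fin_cases k <;>
  · simp [herm, cliff, pauli, Matrix.mulVec, dotProduct, Matrix.vecHead, Matrix.vecTail, Fin.sum_univ_two,
      Pi.smul_apply, smul_eq_mul, Complex.add_re, Complex.mul_im, Complex.mul_re,
      Complex.conj_re, Complex.conj_im, Complex.I_re, Complex.I_im]
    ring

/-- `v ↦ I • (cliff k).mulVec v` as a real continuous linear map. -/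
def Amap (k : Fin 3) : (Fin 2 → ℂ) →L[ℝ] (Fin 2 → ℂ) :=
  LinearMap.toContinuousLinearMap ((I • (cliff k).mulVecLin).restrictScalars ℝ)

lemma Amap_apply (k : Fin 3) (v : Fin 2 → ℂ) : Amap k v = I • (cliff k).mulVec v := rfl

/-- Complex conjugation as a real continuous linear map. -/
def conjC : ℂ →L[ℝ] ℂ := Complex.conjCLE.toContinuousLinearMap

lemma hasFDerivAt_herm {f g : E3 → (Fin 2 → ℂ)}
    {f' g' : E3 →L[ℝ] (Fin 2 → ℂ)} {x : E3}
    (hf : HasFDerivAt f f' x) (hg : HasFDerivAt g g' x) :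
    HasFDerivAt (fun y => herm (f y) (g y))
      (∑ j : Fin 2, ((starRingEnd ℂ (f x j)) • ((ContinuousLinearMap.proj j).comp g') +
        (g x j • (conjC.comp ((ContinuousLinearMap.proj (R := ℝ) j).comp f'))))) x := by
  have : (fun y => herm (f y) (g y)) =
      fun y => ∑ j : Fin 2, starRingEnd ℂ (f y j) * g y j := by
    funext y; rfl
  rw [this]
  apply HasFDerivAt.fun_sum
  intro j _
  have hfj : HasFDerivAt (fun y => starRingEnd ℂ (f y j))
      (conjC.comp ((ContinuousLinearMap.proj (R := ℝ) j).comp f')) x :=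
    conjC.hasFDerivAt.comp x
      (((ContinuousLinearMap.proj (R := ℝ) (φ := fun _ : Fin 2 => ℂ) j)).hasFDerivAt.comp x hf)
  have hgj : HasFDerivAt (fun y => g y j)
      ((ContinuousLinearMap.proj (R := ℝ) j).comp g') x :=
    ((ContinuousLinearMap.proj (R := ℝ) (φ := fun _ : Fin 2 => ℂ) j)).hasFDerivAt.comp x hg
  exact hfj.mul hgj

lemma hasFDerivAt_herm' {f g : E3 → (Fin 2 → ℂ)}
    {f' g' : E3 →L[ℝ] (Fin 2 → ℂ)} {x : E3}
    (_hf : HasFDerivAt f f' x) (_hg : HasFDerivAt g g' x) (u : E3) :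
    (∑ j : Fin 2, ((starRingEnd ℂ (f x j)) • ((ContinuousLinearMap.proj j).comp g') +
        (g x j • (conjC.comp ((ContinuousLinearMap.proj (R := ℝ) j).comp f'))))) u
      = herm (f' u) (g x) + herm (f x) (g' u) := by
  simp [herm, conjC, Finset.sum_add_distrib, mul_comm]
  ring

lemma herm_sum_left {ι : Type*} (s : Finset ι) (v : ι → Fin 2 → ℂ) (w : Fin 2 → ℂ) :
    herm (∑ i ∈ s, v i) w = ∑ i ∈ s, herm (v i) w := by
  simp only [herm, Finset.sum_apply, map_sum, Finset.sum_mul]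
  exact Finset.sum_comm

/-- The Dirac current `X_k = ⟨I e_k ψ, ψ⟩` is real-valued, its divergence equals
`2 Re ⟨I D̸ψ, ψ⟩`; in particular it is divergence free for harmonic spinors. -/
theorem dirac_current_real_and_divergence
    (ψ : EuclideanSpace ℝ (Fin 3) → (Fin 2 → ℂ)) (hψ : ContDiff ℝ 1 ψ)
    (X : Fin 3 → EuclideanSpace ℝ (Fin 3) → ℂ)
    (hX : ∀ k x, X k x = herm (I • ((cliff k).mulVec (ψ x))) (ψ x)) :
    (∀ k x, (X k x).im = 0) ∧
    (∀ x, ediv (fun y => toE3 (fun k => (X k y).re)) x =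
      2 * (herm (I • dirac ψ x) (ψ x)).re) ∧
    ((∀ x, dirac ψ x = 0) →
      ∀ x, ediv (fun y => toE3 (fun k => (X k y).re)) x = 0) := by
  have hre : ∀ k x, (X k x).im = 0 := fun k x => by rw [hX k x]; exact key1 k (ψ x)
  have hdiv : ∀ x, ediv (fun y => toE3 (fun k => (X k y).re)) x =
      2 * (herm (I • dirac ψ x) (ψ x)).re := by
    intro x
    set D : E3 →L[ℝ] (Fin 2 → ℂ) := fderiv ℝ ψ x with hD
    have hψx : HasFDerivAt ψ D x :=
      (hψ.differentiable one_ne_zero x).hasFDerivAt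
    -- derivative of each component X k
    have hAk : ∀ k : Fin 3, HasFDerivAt (fun y => Amap k (ψ y)) ((Amap k).comp D) x :=
      fun k => (Amap k).hasFDerivAt.comp x hψx
    -- derivative CLM for X k
    set Fk : Fin 3 → (E3 →L[ℝ] ℂ) := fun k =>
      (∑ j : Fin 2, ((starRingEnd ℂ ((Amap k) (ψ x) j)) •
          ((ContinuousLinearMap.proj j).comp D) +
        (ψ x j • (conjC.comp ((ContinuousLinearMap.proj (R := ℝ) j).comp ((Amap k).comp D))))))
      with hFk
    have hXk : ∀ k, HasFDerivAt (fun y => X k y) (Fk k) x := by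
      intro k
      have := hasFDerivAt_herm (f := fun y => Amap k (ψ y)) (g := ψ) (hAk k) hψx
      refine this.congr_of_eventuallyEq ?_
      filter_upwards with y
      rw [hX k y, Amap_apply]
    have hFkval : ∀ k u, Fk k u = herm (I • (cliff k).mulVec (D u)) (ψ x)
        + herm (I • (cliff k).mulVec (ψ x)) (D u) := by
      intro k u
      have := hasFDerivAt_herm' (f := fun y => Amap k (ψ y)) (g := ψ) (hAk k) hψx u
      simpa only [hFk, ContinuousLinearMap.comp_apply, Amap_apply] using this
    -- the vector field and its derivative
    set W : E3 → (Fin 3 → ℝ) := fun y k => (X k y).re with hW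
    have hWk : HasFDerivAt W
        (ContinuousLinearMap.pi (fun k => Complex.reCLM.comp (Fk k))) x := by
      rw [hasFDerivAt_pi']
      intro k
      exact Complex.reCLM.hasFDerivAt.comp x (hXk k)
    have hV : HasFDerivAt (fun y => toE3 (fun k => (X k y).re))
        (((EuclideanSpace.equiv (Fin 3) ℝ).symm :
            (Fin 3 → ℝ) ≃L[ℝ] E3).toContinuousLinearMap.comp
          (ContinuousLinearMap.pi (fun k => Complex.reCLM.comp (Fk k)))) x :=
      ((EuclideanSpace.equiv (Fin 3) ℝ).symm.toContinuousLinearMap).hasFDerivAt.comp x hWk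
    rw [ediv, hV.fderiv]
    have hinner : ∀ (v : E3) (i : Fin 3), ⟪v, EuclideanSpace.single i (1:ℝ)⟫ = v i := by
      intro v i
      rw [EuclideanSpace.inner_single_right]
      simp
    calc ∑ i, ⟪(((EuclideanSpace.equiv (Fin 3) ℝ).symm :
            (Fin 3 → ℝ) ≃L[ℝ] E3).toContinuousLinearMap.comp
          (ContinuousLinearMap.pi (fun k => Complex.reCLM.comp (Fk k))))
            (EuclideanSpace.single i 1), EuclideanSpace.single i 1⟫
        = ∑ i : Fin 3, (Fk i (EuclideanSpace.single i 1)).re := by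
          refine Finset.sum_congr rfl fun i _ => ?_
          rw [hinner]
          rfl
      _ = ∑ i : Fin 3, 2 * (herm (I • (cliff i).mulVec (D (EuclideanSpace.single i 1)))
            (ψ x)).re := by
          refine Finset.sum_congr rfl fun i _ => ?_
          rw [hFkval]
          rw [Complex.add_re, key2 i (ψ x) (D (EuclideanSpace.single i 1))]
          ring
      _ = 2 * (herm (I • dirac ψ x) (ψ x)).re := by
          rw [dirac, Finset.smul_sum, herm_sum_left, Complex.re_sum, Finset.mul_sum]
  refine ⟨hre, hdiv, fun h0 x => ?_⟩
  rw [hdiv x, h0 x]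
  simp [herm]
end
end

section
/- Let n ≥ 1, let u : EuclideanSpace ℝ (Fin n) → ℝ be C² with ∇u(x) ≠ 0 for every x, and let ρ : EuclideanSpace ℝ (Fin n) → ℝ be a positive C¹ function. Set ν(x) = ∇u(x)/‖∇u(x)‖ and Z(x) = ρ(x) ∇u(x). If div Z = 0 everywhere, then at every point x the mean curvature of the level set of u, namely div(∇u/‖∇u‖)(x), equals − ⟨ν(x), ∇(log ‖Z‖)(x)⟩, i.e. div(∇u/‖∇u‖) = − ⟨ν, ∇ log(ρ ‖∇u‖)⟩. -/
open scoped RealInnerProductSpace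

noncomputable section

theorem sum_inner_single_aux {n : ℕ} (z : EuclideanSpace ℝ (Fin n))
    (L : EuclideanSpace ℝ (Fin n) →L[ℝ] EuclideanSpace ℝ (Fin n)) :
    ∑ i, ⟪z, L (EuclideanSpace.single i 1)⟫ * ⟪z, EuclideanSpace.single i 1⟫ = ⟪z, L z⟫ := by
  have hz : ∑ i, ⟪z, EuclideanSpace.single i 1⟫ • EuclideanSpace.single i (1:ℝ) = z := by
    have h2 := (EuclideanSpace.basisFun (Fin n) ℝ).sum_repr z
    simp only [EuclideanSpace.basisFun_apply, EuclideanSpace.basisFun_repr] at h2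
    have step : ∀ i : Fin n, ⟪z, EuclideanSpace.single i 1⟫ = z i := fun i => by
      rw [EuclideanSpace.inner_single_right]; norm_num
    simp_rw [step]
    exact h2
  calc ∑ i, ⟪z, L (EuclideanSpace.single i 1)⟫ * ⟪z, EuclideanSpace.single i 1⟫
      = ⟪z, L (∑ i, ⟪z, EuclideanSpace.single i 1⟫ • EuclideanSpace.single i 1)⟫ := by
        rw [map_sum, inner_sum]
        refine Finset.sum_congr rfl fun i _ => ?_
        rw [map_smul, inner_smul_right]; ring
    _ = ⟪z, L z⟫ := by rw [hz]

/-- If `Z = ρ ∇u` is divergence free with `ρ > 0`, then the mean curvature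
`div(∇u/‖∇u‖)` of the level sets of `u` equals `−⟨ν, ∇ log ‖Z‖⟩`. -/
theorem mean_curvature_of_div_free_weighted_gradient
    {n : ℕ} (hn : 1 ≤ n)
    (u : EuclideanSpace ℝ (Fin n) → ℝ) (hu : ContDiff ℝ 2 u)
    (hgrad : ∀ x, gradient u x ≠ 0)
    (ρ : EuclideanSpace ℝ (Fin n) → ℝ) (hρpos : ∀ x, 0 < ρ x) (hρ : ContDiff ℝ 1 ρ)
    (ν Z : EuclideanSpace ℝ (Fin n) → EuclideanSpace ℝ (Fin n))
    (hν : ∀ x, ν x = ‖gradient u x‖⁻¹ • gradient u x)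
    (hZ : ∀ x, Z x = ρ x • gradient u x)
    (hdiv : ∀ x, ediv Z x = 0) :
    ∀ x, ediv (fun y => ‖gradient u y‖⁻¹ • gradient u y) x =
      - ⟪ν x, gradient (fun y => Real.log ‖Z y‖) x⟫ := by
  intro x
  -- gradient u is differentiable
  have hu' : ContDiff ℝ ((1 : WithTop ℕ∞) + 1) u := by
    rw [one_add_one_eq_two]; exact hu
  have hfd : ContDiff ℝ 1 (fderiv ℝ u) := (contDiff_succ_iff_fderiv.mp hu').2.2
  have hGdiff : Differentiable ℝ (gradient u) := by
    have : gradient u = fun y =>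
        (InnerProductSpace.toDual ℝ (EuclideanSpace ℝ (Fin n))).symm (fderiv ℝ u y) := rfl
    rw [this]
    exact ((InnerProductSpace.toDual ℝ (EuclideanSpace ℝ (Fin n))).symm.differentiable).comp
      (hfd.differentiable one_ne_zero)
  -- Z is differentiable
  have hZfun : Z = fun y => ρ y • gradient u y := funext hZ
  have hZdiff : DifferentiableAt ℝ Z x := by
    rw [hZfun]
    exact ((hρ.differentiable one_ne_zero) x).smul (hGdiff x)
  set L : EuclideanSpace ℝ (Fin n) →L[ℝ] EuclideanSpace ℝ (Fin n) := fderiv ℝ Z x with hL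
  have hZx : HasFDerivAt Z L x := hZdiff.hasFDerivAt
  set z : EuclideanSpace ℝ (Fin n) := Z x with hzdef
  have hρne : ∀ y, ρ y ≠ 0 := fun y => (hρpos y).ne'
  have hZnorm : ∀ y, ‖Z y‖ = ρ y * ‖gradient u y‖ := fun y => by
    rw [hZ y, norm_smul, Real.norm_eq_abs, abs_of_pos (hρpos y)]
  have hZne : ∀ y, Z y ≠ 0 := fun y => by
    rw [hZ y]; exact smul_ne_zero (hρne y) (hgrad y)
  have hZnormpos : ∀ y, 0 < ‖Z y‖ := fun y => norm_pos_iff.mpr (hZne y)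
  have hzne : z ≠ 0 := hZne x
  have hznorm : ‖z‖ ≠ 0 := (hZnormpos x).ne'
  -- the normalized field
  have hpt : ∀ y, ‖gradient u y‖⁻¹ • gradient u y = ‖Z y‖⁻¹ • Z y := fun y => by
    have hG : ‖gradient u y‖ ≠ 0 := norm_ne_zero_iff.mpr (hgrad y)
    rw [hZ y, norm_smul, Real.norm_eq_abs, abs_of_pos (hρpos y), smul_smul]
    congr 1
    field_simp
    rw [div_self (hρne y)]
  set K : EuclideanSpace ℝ (Fin n) →L[ℝ] ℝ := (innerSL ℝ z).comp L with hK
  have hKapp : ∀ v, K v = ⟪z, L v⟫ := fun v => rfl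
  -- derivative of ‖Z ·‖
  have hsq : HasFDerivAt (fun y => ‖Z y‖ ^ 2) ((2:ℕ) • K) x := by
    have := hZx.norm_sq
    exact this
  have hlog2 : HasFDerivAt (fun y => Real.log (‖Z y‖ ^ 2)) ((‖z‖ ^ 2)⁻¹ • (2:ℕ) • K) x :=
    hsq.log (by positivity)
  have hgfun : (fun y => Real.log ‖Z y‖) = fun y => (2:ℝ)⁻¹ * Real.log (‖Z y‖ ^ 2) := by
    funext y
    rw [Real.log_pow]
    push_cast
    ring
  have hg : HasFDerivAt (fun y => Real.log ‖Z y‖) ((‖z‖ ^ 2)⁻¹ • K) x := by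
    rw [hgfun]
    have h := hlog2.const_mul ((2:ℝ)⁻¹)
    refine h.congr_fderiv ?_
    ext v
    simp only [ContinuousLinearMap.smul_apply, smul_eq_mul, nsmul_eq_mul]
    push_cast
    ring
  -- derivative of the norm itself
  have hnorm : HasFDerivAt (fun y => ‖Z y‖) (‖z‖⁻¹ • K) x := by
    have hexp := (Real.hasDerivAt_exp (Real.log ‖Z x‖)).comp_hasFDerivAt x hg
    rw [Function.comp_def] at hexp
    have heq : (fun y => Real.exp (Real.log ‖Z y‖)) = fun y => ‖Z y‖ := by
      funext y; exact Real.exp_log (hZnormpos y)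
    rw [heq, Real.exp_log (hZnormpos x)] at hexp
    refine hexp.congr_fderiv ?_
    ext v
    simp only [ContinuousLinearMap.smul_apply, smul_eq_mul]
    rw [← hzdef]
    field_simp
  have hinv : HasFDerivAt (fun y => ‖Z y‖⁻¹) ((-(‖z‖ ^ 2)⁻¹) • (‖z‖⁻¹ • K)) x := by
    have h := (hasDerivAt_inv hznorm).comp_hasFDerivAt x hnorm
    rw [Function.comp_def] at h
    exact h
  have hV : HasFDerivAt (fun y => ‖Z y‖⁻¹ • Z y)
      (‖z‖⁻¹ • L + ((-(‖z‖ ^ 2)⁻¹) • (‖z‖⁻¹ • K)).smulRight z) x := hinv.smul hZx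
  -- compute the divergence
  have hfV : fderiv ℝ (fun y => ‖gradient u y‖⁻¹ • gradient u y) x
      = ‖z‖⁻¹ • L + ((-(‖z‖ ^ 2)⁻¹) • (‖z‖⁻¹ • K)).smulRight z := by
    rw [funext hpt]
    exact hV.fderiv
  have hdivZ : ∑ i, ⟪L (EuclideanSpace.single i 1), EuclideanSpace.single i 1⟫ = 0 := by
    have h := hdiv x
    unfold ediv at h
    rw [← hL] at h
    exact h
  have lhs_eq : ediv (fun y => ‖gradient u y‖⁻¹ • gradient u y) x
      = -((‖z‖ ^ 2)⁻¹ * ‖z‖⁻¹) * ⟪z, L z⟫ := by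
    unfold ediv
    rw [hfV]
    have expand : ∀ i : Fin n,
        ⟪(‖z‖⁻¹ • L + ((-(‖z‖ ^ 2)⁻¹) • (‖z‖⁻¹ • K)).smulRight z) (EuclideanSpace.single i 1),
          EuclideanSpace.single i 1⟫
        = ‖z‖⁻¹ * ⟪L (EuclideanSpace.single i 1), EuclideanSpace.single i 1⟫
          + (-((‖z‖ ^ 2)⁻¹ * ‖z‖⁻¹)) *
            (⟪z, L (EuclideanSpace.single i 1)⟫ * ⟪z, EuclideanSpace.single i 1⟫) := by
      intro i
      simp only [ContinuousLinearMap.add_apply, ContinuousLinearMap.smul_apply,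
        ContinuousLinearMap.smulRight_apply, inner_add_left, real_inner_smul_left, hKapp,
        smul_eq_mul]
      ring
    simp_rw [expand]
    rw [Finset.sum_add_distrib, ← Finset.mul_sum, ← Finset.mul_sum, hdivZ,
      sum_inner_single_aux z L]
    ring
  -- compute the right-hand side
  have hgradg : ⟪gradient (fun y => Real.log ‖Z y‖) x, ν x⟫
      = fderiv ℝ (fun y => Real.log ‖Z y‖) x (ν x) := by
    rw [show gradient (fun y => Real.log ‖Z y‖) x
      = (InnerProductSpace.toDual ℝ (EuclideanSpace ℝ (Fin n))).symm
          (fderiv ℝ (fun y => Real.log ‖Z y‖) x) from rfl]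
    exact InnerProductSpace.toDual_symm_apply
  have hνx : ν x = ‖z‖⁻¹ • z := by rw [hν x, hpt x]
  rw [lhs_eq, show ⟪ν x, gradient (fun y => Real.log ‖Z y‖) x⟫
      = ⟪gradient (fun y => Real.log ‖Z y‖) x, ν x⟫ from real_inner_comm _ _,
    hgradg, hg.fderiv, hνx]
  simp only [ContinuousLinearMap.smul_apply, hKapp, map_smul, inner_smul_right, smul_eq_mul]
  ring
end
end

section
/- Let n ≥ 1, let u : EuclideanSpace ℝ (Fin n) → ℝ be C² and let p be a point with ∇u(p) ≠ 0. Set ν = ∇u(p)/‖∇u(p)‖, let H = Hess u(p) denote the Hessian of u at p (a symmetric bilinear form / self-adjoint operator), and let P = Id − ν ⊗ ν be the orthogonal projection onto the orthogonal complement of ν. Then, with ‖·‖ the Frobenius (Hilbert–Schmidt) norm, ‖P ∘ H ∘ P‖² = ‖H‖² − 2 ‖∇(‖∇u‖)(p)‖² + ⟨ν, ∇(‖∇u‖)(p)⟩², where ∇(‖∇u‖)(p) = H ν is the gradient of the function x ↦ ‖∇u(x)‖ at p. Equivalently, for the second fundamental form A = ‖∇u(p)‖⁻¹ P H P of the level set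 of u: ‖A‖² = ‖∇u(p)‖⁻² ‖H‖² − 2 ‖∇ log ‖∇u‖ (p)‖² + ⟨ν, ∇ log ‖∇u‖ (p)⟩². -/
open scoped RealInnerProductSpace

noncomputable section

/-- Squared Frobenius (Hilbert–Schmidt) norm of a continuous linear map on Euclidean space. -/
def frobSq {n : ℕ} (T : EuclideanSpace ℝ (Fin n) →L[ℝ] EuclideanSpace ℝ (Fin n)) : ℝ :=
  ∑ i, ‖T (EuclideanSpace.single i 1)‖ ^ 2

lemma norm_sub_smul_sq {E : Type*} [NormedAddCommGroup E] [InnerProductSpace ℝ E]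
    (y v : E) (t : ℝ) :
    ‖y - t • v‖ ^ 2 = ‖y‖ ^ 2 - 2 * (t * ⟪y, v⟫) + t ^ 2 * ‖v‖ ^ 2 := by
  rw [← real_inner_self_eq_norm_sq, inner_sub_sub_self, real_inner_smul_left,
    real_inner_smul_right, real_inner_smul_left, real_inner_smul_right,
    real_inner_self_eq_norm_sq, real_inner_self_eq_norm_sq, real_inner_comm v y]
  ring

theorem frob_key {n : ℕ} (H P : EuclideanSpace ℝ (Fin n) →L[ℝ] EuclideanSpace ℝ (Fin n))
    (ν : EuclideanSpace ℝ (Fin n)) (hν1 : ‖ν‖ = 1)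
    (hsymm : ∀ v w, ⟪H v, w⟫ = ⟪H w, v⟫)
    (hPa : ∀ x, P x = x - ⟪ν, x⟫ • ν) :
    frobSq (P.comp (H.comp P)) = frobSq H - 2 * ‖H ν‖ ^ 2 + ⟪ν, H ν⟫ ^ 2 := by
  set g := H ν with hg
  set c : ℝ := ⟪ν, H ν⟫ with hc
  set e : Fin n → EuclideanSpace ℝ (Fin n) := fun i => EuclideanSpace.single i 1 with he
  have hcoord : ∀ (x : EuclideanSpace ℝ (Fin n)) i, ⟪x, e i⟫ = x i := by
    intro x i; simp [he, EuclideanSpace.inner_single_right]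
  have hinner : ∀ (x y : EuclideanSpace ℝ (Fin n)), ⟪x, y⟫ = ∑ i, x i * y i := by
    intro x y; simp [PiLp.inner_apply, RCLike.inner_apply, conj_trivial]
    exact Finset.sum_congr rfl fun _ _ => mul_comm _ _
  have hνg : ∀ i, ⟪ν, H (e i)⟫ = g i := by
    intro i
    rw [real_inner_comm, hsymm, hcoord]
  have key : ∀ i, ‖(P.comp (H.comp P)) (e i)‖ ^ 2 =
      ‖H (e i)‖ ^ 2 - 2 * (ν i * ⟪H (e i), g⟫) + (ν i)^2 * ‖g‖ ^ 2
        - (g i - ν i * c)^2 := by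
    intro i
    have hPe : P (e i) = e i - ν i • ν := by rw [hPa, hcoord]
    have hHPe : H (P (e i)) = H (e i) - ν i • g := by rw [hPe, map_sub, map_smul]
    have ht : ⟪ν, H (P (e i))⟫ = g i - ν i * c := by
      rw [hHPe, inner_sub_right, real_inner_smul_right, hνg, hc]
    have h1 : (P.comp (H.comp P)) (e i) = H (P (e i)) - (g i - ν i * c) • ν := by
      simp only [ContinuousLinearMap.comp_apply]
      rw [hPa (H (P (e i))), ht]
    have h2 : ⟪H (P (e i)), ν⟫ = g i - ν i * c := by rw [real_inner_comm]; exact ht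
    rw [h1, norm_sub_smul_sq, h2, hν1, hHPe, norm_sub_smul_sq]
    ring
  have sum1 : ∑ i, ν i * ⟪H (e i), g⟫ = ‖g‖ ^ 2 := by
    have h3 : ∀ i, ⟪H (e i), g⟫ = (H g) i := by
      intro i; rw [hsymm, hcoord]
    simp_rw [h3]
    rw [← hinner, real_inner_comm, hsymm, ← hg, real_inner_comm,
      real_inner_self_eq_norm_sq]
  have sum2 : ∑ i, (ν i)^2 = 1 := by
    have h4 : ∑ i, (ν i)^2 = ∑ i, ν i * ν i := by
      apply Finset.sum_congr rfl; intros; ring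
    rw [h4, ← hinner, real_inner_self_eq_norm_sq, hν1, one_pow]
  have sum3 : ∑ i, (g i - ν i * c)^2 = ‖g‖ ^ 2 - c ^ 2 := by
    have e1 : ∑ i, g i * g i = ‖g‖ ^ 2 := by rw [← hinner, real_inner_self_eq_norm_sq]
    have e2 : ∑ i, ν i * g i = c := by rw [← hinner, hc]
    have h5 : ∑ i, (g i - ν i * c)^2
        = ∑ i, (g i * g i - 2 * c * (ν i * g i) + c^2 * (ν i * ν i)) := by
      apply Finset.sum_congr rfl; intro i _; ring
    have e3 : ∑ i, ν i * ν i = 1 := by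
      rw [← hinner, real_inner_self_eq_norm_sq, hν1, one_pow]
    rw [h5, Finset.sum_add_distrib, Finset.sum_sub_distrib, ← Finset.mul_sum,
      ← Finset.mul_sum, e1, e2, e3]
    ring
  unfold frobSq
  have hfold : ∀ i : Fin n, (EuclideanSpace.single i (1:ℝ)) = e i := fun i => rfl
  simp_rw [hfold, key]
  rw [Finset.sum_sub_distrib, Finset.sum_add_distrib, Finset.sum_sub_distrib,
    ← Finset.mul_sum, sum1, sum3]
  have h6 : ∑ i, (ν i)^2 * ‖g‖ ^ 2 = ‖g‖ ^ 2 := by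
    rw [← Finset.sum_mul, sum2, one_mul]
  rw [h6]
  ring

/-- The squared Frobenius norm of the tangentially projected Hessian of `u` at a point
with nonvanishing gradient:
`‖P H P‖² = ‖H‖² − 2‖∇‖∇u‖‖² + ⟨ν, ∇‖∇u‖⟩²`. -/
theorem projected_hessian_frobenius_identity
    {n : ℕ} (hn : 1 ≤ n)
    (u : EuclideanSpace ℝ (Fin n) → ℝ) (hu : ContDiff ℝ 2 u)
    (p : EuclideanSpace ℝ (Fin n)) (hp : gradient u p ≠ 0)
    (ν : EuclideanSpace ℝ (Fin n)) (hν : ν = ‖gradient u p‖⁻¹ • gradient u p)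
    (H : EuclideanSpace ℝ (Fin n) →L[ℝ] EuclideanSpace ℝ (Fin n))
    (hH : ∀ v w, ⟪H v, w⟫ = iteratedFDeriv ℝ 2 u p ![v, w])
    (P : EuclideanSpace ℝ (Fin n) →L[ℝ] EuclideanSpace ℝ (Fin n))
    (hP : P = ContinuousLinearMap.id ℝ (EuclideanSpace ℝ (Fin n)) -
      (innerSL ℝ ν).smulRight ν) :
    frobSq (P.comp (H.comp P)) =
      frobSq H - 2 * ‖gradient (fun x => ‖gradient u x‖) p‖ ^ 2 +
        ⟪ν, gradient (fun x => ‖gradient u x‖) p⟫ ^ 2 := by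
  have hnorm0 : ‖gradient u p‖ ≠ 0 := norm_ne_zero_iff.mpr hp
  have hν1 : ‖ν‖ = 1 := by
    rw [hν, norm_smul, norm_inv, norm_norm, inv_mul_cancel₀ hnorm0]
  have hsymm : ∀ v w, ⟪H v, w⟫ = ⟪H w, v⟫ := by
    intro v w
    rw [hH, hH, iteratedFDeriv_two_apply, iteratedFDeriv_two_apply]
    simp only [Matrix.cons_val_zero, Matrix.cons_val_one, Matrix.head_cons]
    exact (hu.contDiffAt.isSymmSndFDerivAt (by norm_num)) v w
  have hPa : ∀ x, P x = x - ⟪ν, x⟫ • ν := by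
    intro x
    rw [hP]
    simp [ContinuousLinearMap.sub_apply, ContinuousLinearMap.smulRight_apply]
  -- the gradient of ‖∇u‖ is H ν
  have hdiff : DifferentiableAt ℝ (fderiv ℝ u) p :=
    ((hu.fderiv_right (m := 1) (by norm_num)).differentiable (by norm_num)).differentiableAt
  set L := (InnerProductSpace.toDual ℝ (EuclideanSpace ℝ (Fin n))).symm with hL
  have hHD : ∀ v, L (fderiv ℝ (fderiv ℝ u) p v) = H v := by
    intro v
    apply ext_inner_right ℝ
    intro w
    rw [hL, InnerProductSpace.toDual_symm_apply, hH, iteratedFDeriv_two_apply]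
    simp
  have hG' : HasFDerivAt (gradient u) H p := by
    have h1 : HasFDerivAt (fderiv ℝ u) (fderiv ℝ (fderiv ℝ u) p) p := hdiff.hasFDerivAt
    rw [hasFDerivAt_iff_isLittleO_nhds_zero] at h1 ⊢
    have heq : (fun h => gradient u (p + h) - gradient u p - H h)
        = fun h => L (fderiv ℝ u (p + h) - fderiv ℝ u p - fderiv ℝ (fderiv ℝ u) p h) := by
      funext h
      rw [map_sub, map_sub, hHD]
      rfl
    rw [heq, ← Asymptotics.isLittleO_norm_left]
    simp only [LinearIsometryEquiv.norm_map]
    rw [Asymptotics.isLittleO_norm_left]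
    exact h1
  have hq : HasFDerivAt (fun x => ⟪gradient u x, gradient u x⟫)
      ((fderivInnerCLM ℝ (gradient u p, gradient u p)).comp (H.prod H)) p :=
    hG'.inner ℝ hG'
  have hqp0 : ⟪gradient u p, gradient u p⟫ ≠ 0 :=
    by rw [real_inner_self_eq_norm_sq]; exact pow_ne_zero _ hnorm0
  have hs : HasDerivAt Real.sqrt (1 / (2 * Real.sqrt ⟪gradient u p, gradient u p⟫))
      ⟪gradient u p, gradient u p⟫ := Real.hasDerivAt_sqrt hqp0
  have hcomp := hs.comp_hasFDerivAt p hq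
  have hfun : (fun x => Real.sqrt ⟪gradient u x, gradient u x⟫)
      = fun x => ‖gradient u x‖ := by
    funext x
    rw [real_inner_self_eq_norm_mul_norm, Real.sqrt_mul_self (norm_nonneg _)]
  rw [show (Real.sqrt ∘ fun x => ⟪gradient u x, gradient u x⟫)
      = fun x => Real.sqrt ⟪gradient u x, gradient u x⟫ from rfl, hfun] at hcomp
  have hsqrtp : Real.sqrt ⟪gradient u p, gradient u p⟫ = ‖gradient u p‖ := by
    rw [real_inner_self_eq_norm_mul_norm, Real.sqrt_mul_self (norm_nonneg _)]
  have hgradN : HasGradientAt (fun x => ‖gradient u x‖) (H ν) p := by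
    rw [hasGradientAt_iff_hasFDerivAt]
    have hCLM : InnerProductSpace.toDual ℝ (EuclideanSpace ℝ (Fin n)) (H ν)
        = (1 / (2 * Real.sqrt ⟪gradient u p, gradient u p⟫)) •
            ((fderivInnerCLM ℝ (gradient u p, gradient u p)).comp (H.prod H)) := by
      ext v
      rw [InnerProductSpace.toDual_apply_apply]
      simp only [ContinuousLinearMap.smul_apply, ContinuousLinearMap.comp_apply,
        ContinuousLinearMap.prod_apply, fderivInnerCLM_apply, smul_eq_mul, hsqrtp]
      rw [hsymm, real_inner_comm ν (H v), hν, real_inner_smul_left,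
        real_inner_comm (gradient u p) (H v)]
      field_simp
      ring
    rw [hCLM]
    exact hcomp
  rw [hgradN.gradient]
  exact frob_key H P ν hν1 hsymm hPa
end
end
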